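/- The number of Motzkin paths of length n ≥ 3 with exactly two plateaus equals (n−3)·n·2^(n−6) (interpreted in the rationals; this is always a natural number for n ≥ 3). -/

import Mathlib

inductive Step : Type
  | U | F | D
  deriving DecidableEq

instance : Fintype Step :=
  ⟨{Step.U, Step.F, Step.D}, fun x => by cases x <;> simp⟩

def stepVal : Step → ℤ
  | .U => 1
  | .F => 0
  | .D => -1

/-- Height of the path after the first `i` steps. -/
def ht (p : List Step) (i : ℕ) : ℤ := ((p.take i).map stepVal).sum

/-- A Motzkin path: starts and ends at height 0 and stays nonnegative. -/
def IsMotzkin (p : List Step) : Prop :=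
  ht p p.length = 0 ∧ ∀ i ≤ p.length, 0 ≤ ht p i

instance : DecidablePred IsMotzkin := fun p => by
  unfold IsMotzkin; infer_instance

/-- Number of ascents: maximal runs of up steps (counted at their last up step). -/
def asc (p : List Step) : ℕ :=
  ((List.range p.length).filter
    (fun i => p[i]? == some Step.U && p[i+1]? != some Step.U)).length

/-- Number of occurrences of `w` as a consecutive subword of `p`. -/
def countSubword (w p : List Step) : ℕ :=
  ((List.range p.length).filter (fun i => w.isPrefixOf (p.drop i))).length

/-- Number of plateaus: occurrences of a subword U F^k D for some k ≥ 0. -/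
def plt (p : List Step) : ℕ :=
  ((List.range p.length).filter (fun i =>
    (List.range p.length).any (fun k =>
      (Step.U :: (List.replicate k Step.F ++ [Step.D])).isPrefixOf (p.drop i)))).length

/-!
Erasing the flat steps of a Motzkin path leaves a Dyck path in which every plateau `U F^k D`
has become a peak `U D`; conversely, the paths of length `n` reducing to a given flat-free word
`w` are determined by the positions of the non-flat steps, so there are `C(n, |w|)` of them.
Peeling off the first peak shows that the Dyck paths with exactly two peaks are the words
`U^a D^b U^(m-a) D^(m-b)` with `1 ≤ b ≤ a < m`, of which there are `C(m, 2)` of semilength `m`.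
The count is therefore `∑ₘ C(m, 2) C(n, 2m)`. Writing `8 C(m, 2) = 2m (2m - 1) - 2m` and
absorbing these factors into `C(n, 2m)` turns it into sums of even- and of odd-indexed binomial
coefficients, each a power of two.
-/
open List (replicate)

theorem List.exists_eq_replicate_append {α : Type*} (x : α) (l : List α) :
    ∃ k t, l = replicate k x ++ t ∧ t.head? ≠ some x := by
  induction l with
  | nil => exact ⟨0, [], rfl, by simp⟩
  | cons y l ih =>
    by_cases hy : y = x
    · obtain ⟨k, t, rfl, ht⟩ := ih
      exact ⟨k + 1, t, by simp [hy, List.replicate_succ], ht⟩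
    · exact ⟨0, y :: l, rfl, by simpa using hy⟩

theorem List.replicate_append_inj_of_head?_ne {α : Type*} {x : α} {k k' : ℕ}
    {t t' : List α} (ht : t.head? ≠ some x) (ht' : t'.head? ≠ some x)
    (h : replicate k x ++ t = replicate k' x ++ t') : k = k' ∧ t = t' := by
  induction k generalizing k' with
  | zero =>
    cases k' with
    | zero => simpa using h
    | succ k' =>
      simp only [List.replicate_zero, List.nil_append, List.replicate_succ, List.cons_append] at h
      simp [h] at ht
  | succ k ih =>
    cases k' with
    | zero =>
      simp only [List.replicate_zero, List.nil_append, List.replicate_succ, List.cons_append] at h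
      simp [← h] at ht'
    | succ k' =>
      simp only [List.replicate_succ, List.cons_append, List.cons.injEq, true_and] at h
      simpa using ih h

theorem List.head?_replicate_append {α : Type*} {b : ℕ} (hb : b ≠ 0) (x : α) (l : List α) :
    (replicate b x ++ l).head? = some x := by
  obtain ⟨b, rfl⟩ := Nat.exists_eq_succ_of_ne_zero hb
  rfl

def eraseFlats (p : List Step) : List Step := p.filter (· != .F)

@[simp] lemma eraseFlats_nil : eraseFlats [] = [] := rfl

@[simp] lemma eraseFlats_cons_F (l : List Step) : eraseFlats (.F :: l) = eraseFlats l := by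
  simp [eraseFlats]

lemma eraseFlats_cons_of_ne {s : Step} (hs : s ≠ .F) (l : List Step) :
    eraseFlats (s :: l) = s :: eraseFlats l := by
  simp [eraseFlats, hs]

@[simp] lemma eraseFlats_cons_U (l : List Step) : eraseFlats (.U :: l) = .U :: eraseFlats l :=
  eraseFlats_cons_of_ne (by decide) l

@[simp] lemma eraseFlats_cons_D (l : List Step) : eraseFlats (.D :: l) = .D :: eraseFlats l :=
  eraseFlats_cons_of_ne (by decide) l

lemma F_not_mem_eraseFlats (p : List Step) : Step.F ∉ eraseFlats p := by
  simp [eraseFlats]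

lemma length_eraseFlats_le (p : List Step) : (eraseFlats p).length ≤ p.length :=
  List.length_filter_le _ _

lemma head?_eraseFlats_eq_D_iff (l : List Step) :
    (eraseFlats l).head? = some .D ↔ ∃ k t, l = replicate k .F ++ .D :: t := by
  induction l with
  | nil => simp
  | cons s l ih =>
    cases s with
    | U =>
      refine ⟨by simp, ?_⟩
      rintro ⟨_ | k, t, h⟩ <;> simp [List.replicate_succ] at h
    | D => exact ⟨fun _ => ⟨0, l, rfl⟩, fun _ => rfl⟩
    | F =>
      rw [eraseFlats_cons_F, ih]
      constructor
      · rintro ⟨k, t, rfl⟩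
        exact ⟨k + 1, t, rfl⟩
      · rintro ⟨_ | k, t, h⟩
        · simp at h
        · exact ⟨k, t, by simpa [List.replicate_succ] using h⟩

def StartsWithPlateau (l : List Step) : Prop :=
  l.head? = some .U ∧ (eraseFlats l.tail).head? = some .D

instance : DecidablePred StartsWithPlateau := fun l => by
  unfold StartsWithPlateau; infer_instance

lemma startsWithPlateau_cons (s : Step) (l : List Step) :
    StartsWithPlateau (s :: l) ↔ s = .U ∧ (eraseFlats l).head? = some .D := by
  simp [StartsWithPlateau]

lemma startsWithPlateau_iff_exists (l : List Step) :
    StartsWithPlateau l ↔ ∃ k t, l = .U :: (replicate k .F ++ .D :: t) := by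
  cases l with
  | nil => simp [StartsWithPlateau]
  | cons s l => simp [startsWithPlateau_cons, head?_eraseFlats_eq_D_iff]

lemma plt_eq_countP (p : List Step) :
    plt p = (List.range p.length).countP fun i => decide (StartsWithPlateau (p.drop i)) := by
  rw [plt, ← List.countP_eq_length_filter]
  refine List.countP_congr fun i _ => ?_
  simp only [List.any_eq_true, List.mem_range, List.isPrefixOf_iff_prefix, decide_eq_true_eq,
    startsWithPlateau_iff_exists]
  constructor
  · rintro ⟨k, -, t, ht⟩
    exact ⟨k, t, by simpa using ht.symm⟩
  · rintro ⟨k, t, ht⟩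
    have hlen : k + 2 ≤ p.length := by
      have := congrArg List.length ht
      simp only [List.length_drop, List.length_cons, List.length_append, List.length_replicate]
        at this
      omega
    exact ⟨k, by omega, t, by simp [ht]⟩

lemma plt_cons (s : Step) (l : List Step) :
    plt (s :: l) = (if StartsWithPlateau (s :: l) then 1 else 0) + plt l := by
  simp only [plt_eq_countP, List.length_cons, List.range_succ_eq_map, List.countP_cons,
    List.countP_map, Function.comp_def, List.drop_succ_cons, List.drop_zero, decide_eq_true_eq]
  omega

def peaks : List Step → ℕ
  | [] => 0
  | .U :: l => (if l.head? = some .D then 1 else 0) + peaks l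
  | .F :: l => peaks l
  | .D :: l => peaks l

lemma plt_eq_peaks_eraseFlats (p : List Step) : plt p = peaks (eraseFlats p) := by
  induction p with
  | nil => rfl
  | cons s l ih =>
    simp only [plt_cons, ih, startsWithPlateau_cons]
    cases s <;> simp [peaks]

def IsMotzkinFrom : ℕ → List Step → Prop
  | h, [] => h = 0
  | h, .U :: l => IsMotzkinFrom (h + 1) l
  | h, .F :: l => IsMotzkinFrom h l
  | 0, .D :: _ => False
  | h + 1, .D :: l => IsMotzkinFrom h l

lemma ht_zero (p : List Step) : ht p 0 = 0 := by simp [ht]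

lemma ht_cons_succ (s : Step) (l : List Step) (i : ℕ) :
    ht (s :: l) (i + 1) = stepVal s + ht l i := by
  simp [ht]

lemma isMotzkinFrom_iff_ht (h : ℕ) (p : List Step) :
    IsMotzkinFrom h p ↔
      (h : ℤ) + ht p p.length = 0 ∧ ∀ i ≤ p.length, 0 ≤ (h : ℤ) + ht p i := by
  induction p generalizing h with
  | nil => simp [IsMotzkinFrom, ht_zero]
  | cons s l ih =>
    have hall : (∀ i ≤ l.length + 1, 0 ≤ (h : ℤ) + ht (s :: l) i) ↔
        ∀ i ≤ l.length, 0 ≤ (h : ℤ) + stepVal s + ht l i := by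
      constructor
      · intro H i hi
        simpa [ht_cons_succ, add_assoc] using H (i + 1) (by omega)
      · rintro H (_ | i) hi
        · simp [ht_zero]
        · simpa [ht_cons_succ, add_assoc] using H i (by omega)
    rw [List.length_cons, hall, ht_cons_succ, ← add_assoc]
    cases s with
    | U => simpa [IsMotzkinFrom, stepVal] using ih (h + 1)
    | F => simpa [IsMotzkinFrom, stepVal] using ih h
    | D =>
      cases h with
      | zero =>
        simp only [IsMotzkinFrom, false_iff, not_and]
        intro _ H
        have := H 0 (Nat.zero_le _)
        simp [stepVal, ht_zero] at this
      | succ h => simpa [IsMotzkinFrom, stepVal] using ih h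

lemma isMotzkin_iff_isMotzkinFrom_zero (p : List Step) : IsMotzkin p ↔ IsMotzkinFrom 0 p := by
  simp [IsMotzkin, isMotzkinFrom_iff_ht]

lemma IsMotzkinFrom.eraseFlats_iff {h : ℕ} {p : List Step} :
    IsMotzkinFrom h (eraseFlats p) ↔ IsMotzkinFrom h p := by
  induction p generalizing h with
  | nil => rfl
  | cons s l ih =>
    cases s with
    | U => simpa [IsMotzkinFrom] using ih
    | F => simpa [IsMotzkinFrom] using ih
    | D => cases h <;> simp [IsMotzkinFrom, ih]

lemma isMotzkinFrom_replicate_U_append (h a : ℕ) (l : List Step) :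
    IsMotzkinFrom h (replicate a .U ++ l) ↔ IsMotzkinFrom (h + a) l := by
  induction a generalizing h with
  | zero => rfl
  | succ a ih => simp [List.replicate_succ, IsMotzkinFrom, ih, add_right_comm, add_assoc]

lemma isMotzkinFrom_replicate_D_append (h b : ℕ) (l : List Step) :
    IsMotzkinFrom h (replicate b .D ++ l) ↔ b ≤ h ∧ IsMotzkinFrom (h - b) l := by
  induction b generalizing h with
  | zero => simp
  | succ b ih =>
    cases h with
    | zero => simp [List.replicate_succ, IsMotzkinFrom]
    | succ h => simp [List.replicate_succ, IsMotzkinFrom, ih]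

lemma isMotzkinFrom_replicate_D (h b : ℕ) : IsMotzkinFrom h (replicate b .D) ↔ b = h := by
  rw [← List.append_nil (replicate b Step.D), isMotzkinFrom_replicate_D_append]
  simp only [IsMotzkinFrom]
  omega

lemma peaks_replicate_D_append (b : ℕ) (l : List Step) :
    peaks (replicate b .D ++ l) = peaks l := by
  induction b with
  | zero => rfl
  | succ b ih => simpa [List.replicate_succ, peaks] using ih

lemma peaks_replicate_U_append {a : ℕ} (ha : a ≠ 0) (l : List Step) :
    peaks (replicate a .U ++ l) = (if l.head? = some .D then 1 else 0) + peaks l := by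
  obtain ⟨a, rfl⟩ := Nat.exists_eq_succ_of_ne_zero ha
  induction a with
  | zero => rfl
  | succ a ih =>
    rw [List.replicate_succ, List.cons_append, peaks, ih (by simp)]
    simp [List.replicate_succ]

lemma peaks_replicate_U (a : ℕ) : peaks (replicate a .U) = 0 := by
  induction a with
  | zero => rfl
  | succ a ih => simp [List.replicate_succ, peaks, ih, List.head?_replicate]

lemma eq_nil_of_head?_ne {l : List Step} (hF : Step.F ∉ l) (hU : l.head? ≠ some .U)
    (hD : l.head? ≠ some .D) : l = [] := by
  cases l with
  | nil => rfl
  | cons s l => cases s <;> simp_all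

lemma exists_peak_decomposition {q : List Step} (hF : Step.F ∉ q) (hD : q.head? ≠ some .D)
    (hq : peaks q ≠ 0) : ∃ a b s, a ≠ 0 ∧ b ≠ 0 ∧ s.head? ≠ some .D ∧
      q = replicate a .U ++ (replicate b .D ++ s) := by
  obtain ⟨a, r, rfl, hr⟩ := List.exists_eq_replicate_append Step.U q
  obtain ⟨b, s, rfl, hs⟩ := List.exists_eq_replicate_append Step.D r
  have hFs : Step.F ∉ s := fun h => hF (by simp [h])
  refine ⟨a, b, s, ?_, ?_, hs, rfl⟩
  · rintro rfl
    obtain rfl : b = 0 := by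
      by_contra hb
      exact hD (List.head?_replicate_append hb _ _)
    simp_all [eq_nil_of_head?_ne hFs hr hs, peaks]
  · rintro rfl
    obtain rfl := eq_nil_of_head?_ne hFs hr hs
    simp [peaks_replicate_U] at hq

lemma eq_replicate_D_of_peaks_eq_zero {h : ℕ} {q : List Step} (hF : Step.F ∉ q)
    (hM : IsMotzkinFrom h q) (hq : peaks q = 0) : q = replicate h .D := by
  induction q generalizing h with
  | nil => rw [show h = 0 from hM]; rfl
  | cons s l ih =>
    have hFl : Step.F ∉ l := fun hl => hF (List.mem_cons_of_mem _ hl)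
    cases s with
    | F => simp at hF
    | U =>
      simp only [peaks, Nat.add_eq_zero_iff, ite_eq_right_iff] at hq
      simp [ih hFl hM hq.2, List.replicate_succ] at hq
    | D =>
      cases h with
      | zero => exact hM.elim
      | succ h => rw [ih hFl hM hq, List.replicate_succ]

lemma eq_of_peaks_eq_one {h : ℕ} {q : List Step} (hF : Step.F ∉ q) (hD : q.head? ≠ some .D)
    (hM : IsMotzkinFrom h q) (hq : peaks q = 1) :
    ∃ a, a ≠ 0 ∧ q = replicate a .U ++ replicate (h + a) .D := by
  obtain ⟨a, b, s, ha, hb, hs, rfl⟩ := exists_peak_decomposition hF hD (by omega)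
  have hFs : Step.F ∉ s := fun h => hF (by simp [h])
  rw [isMotzkinFrom_replicate_U_append, isMotzkinFrom_replicate_D_append] at hM
  rw [peaks_replicate_U_append ha, List.head?_replicate_append hb, if_pos rfl,
    peaks_replicate_D_append] at hq
  have hs' := eq_replicate_D_of_peaks_eq_zero hFs hM.2 (by omega)
  have hab : h + a - b = 0 := by simpa [hs', List.head?_replicate] using hs
  refine ⟨a, ha, ?_⟩
  rw [hs', hab, List.replicate_zero, List.append_nil, show b = h + a by omega]

lemma head?_ne_D_of_isMotzkinFrom_zero {q : List Step} (hM : IsMotzkinFrom 0 q) :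
    q.head? ≠ some .D := by
  rcases q with _ | ⟨_ | _ | _, _⟩ <;> simp_all [IsMotzkinFrom]

def twoPeakWord (m a b : ℕ) : List Step :=
  replicate a .U ++ (replicate b .D ++ (replicate (m - a) .U ++ replicate (m - b) .D))

lemma eq_twoPeakWord_of_peaks_eq_two {q : List Step} (hF : Step.F ∉ q)
    (hM : IsMotzkinFrom 0 q) (hq : peaks q = 2) :
    ∃ m a b, 1 ≤ b ∧ b ≤ a ∧ a < m ∧ q = twoPeakWord m a b := by
  obtain ⟨a, b, s, ha, hb, hs, rfl⟩ :=
    exists_peak_decomposition hF (head?_ne_D_of_isMotzkinFrom_zero hM) (by omega)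
  have hFs : Step.F ∉ s := fun h => hF (by simp [h])
  rw [isMotzkinFrom_replicate_U_append, isMotzkinFrom_replicate_D_append] at hM
  rw [peaks_replicate_U_append ha, List.head?_replicate_append hb, if_pos rfl,
    peaks_replicate_D_append] at hq
  obtain ⟨c, hc, rfl⟩ := eq_of_peaks_eq_one hFs hs hM.2 (by omega)
  refine ⟨a + c, a, b, by omega, by omega, by omega, ?_⟩
  rw [twoPeakWord, show a + c - a = c by omega, show a + c - b = 0 + a - b + c by omega]

lemma F_not_mem_twoPeakWord (m a b : ℕ) : Step.F ∉ twoPeakWord m a b := by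
  simp [twoPeakWord, List.mem_replicate]

lemma length_twoPeakWord {m a b : ℕ} (hba : b ≤ a) (ham : a ≤ m) :
    (twoPeakWord m a b).length = 2 * m := by
  simp only [twoPeakWord, List.length_append, List.length_replicate]
  omega

lemma isMotzkinFrom_twoPeakWord {m a b : ℕ} (hba : b ≤ a) (ham : a ≤ m) :
    IsMotzkinFrom 0 (twoPeakWord m a b) := by
  simp only [twoPeakWord, isMotzkinFrom_replicate_U_append, isMotzkinFrom_replicate_D_append,
    isMotzkinFrom_replicate_D]
  omega

lemma peaks_twoPeakWord {m a b : ℕ} (hb : 1 ≤ b) (hba : b ≤ a) (ham : a < m) :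
    peaks (twoPeakWord m a b) = 2 := by
  rw [twoPeakWord, peaks_replicate_U_append (by omega), List.head?_replicate_append (by omega),
    if_pos rfl, peaks_replicate_D_append, ← List.append_nil (replicate (m - b) _),
    peaks_replicate_U_append (by omega), List.head?_replicate_append (by omega), if_pos rfl,
    peaks_replicate_D_append]
  rfl

theorem isMotzkin_and_plt_eq_two_iff (p : List Step) :
    IsMotzkin p ∧ plt p = 2 ↔
      ∃ m a b, 1 ≤ b ∧ b ≤ a ∧ a < m ∧ eraseFlats p = twoPeakWord m a b := by
  rw [isMotzkin_iff_isMotzkinFrom_zero, ← IsMotzkinFrom.eraseFlats_iff, plt_eq_peaks_eraseFlats]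
  constructor
  · rintro ⟨hM, hq⟩
    exact eq_twoPeakWord_of_peaks_eq_two (F_not_mem_eraseFlats p) hM hq
  · rintro ⟨m, a, b, hb, hba, ham, hw⟩
    rw [hw]
    exact ⟨isMotzkinFrom_twoPeakWord hba ham.le, peaks_twoPeakWord hb hba ham⟩

lemma Nat.card_subtype_and_mem_finset {α β : Type*} (P : α → Prop) (f : α → β)
    (s : Finset β) [∀ b, Finite {a // P a ∧ f a = b}] :
    Nat.card {a // P a ∧ f a ∈ s} = ∑ b ∈ s, Nat.card {a // P a ∧ f a = b} := by
  rw [← Finset.sum_coe_sort s, ← Nat.card_sigma]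
  exact Nat.card_congr
    { toFun := fun x => ⟨⟨f x, x.2.2⟩, x, x.2.1, rfl⟩
      invFun := fun y => ⟨y.2, y.2.2.1, by rw [y.2.2.2]; exact y.1.2⟩
      left_inv := fun _ => rfl
      right_inv := fun y => Sigma.subtype_ext (Subtype.ext y.2.2.2) rfl }

instance (n : ℕ) (Q : List Step → Prop) : Finite {p : List Step // p.length = n ∧ Q p} :=
  ((List.finite_length_eq Step n).subset fun _ h => h.1).to_subtype

lemma card_length_succ (n : ℕ) (Q : List Step → Prop) :
    Nat.card {p : List Step // p.length = n + 1 ∧ Q p}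
      = ∑ s : Step, Nat.card {t : List Step // t.length = n ∧ Q (s :: t)} := by
  rw [← Nat.card_sigma]
  refine (Nat.card_eq_of_bijective (fun x => ⟨x.1 :: x.2.1, by simp [x.2.2.1], x.2.2.2⟩)
    ⟨?_, ?_⟩).symm
  · rintro ⟨s, t, ht⟩ ⟨s', t', ht'⟩ h
    simp only [Subtype.mk.injEq, List.cons.injEq] at h
    obtain ⟨rfl, rfl⟩ := h
    rfl
  · rintro ⟨_ | ⟨s, t⟩, hlen, hQ⟩
    · simp at hlen
    · exact ⟨⟨s, t, by simpa using hlen, hQ⟩, rfl⟩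

lemma card_eraseFlats_cons_eq (n : ℕ) {c : Step} (hc : c ≠ .F) (w : List Step) :
    Nat.card {t : List Step // t.length = n ∧ eraseFlats (c :: t) = w}
      = if w.head? = some c then Nat.card {t : List Step // t.length = n ∧ eraseFlats t = w.tail}
        else 0 := by
  simp only [eraseFlats_cons_of_ne hc]
  split_ifs with hw
  · obtain ⟨w, rfl⟩ := List.head?_eq_some_iff.1 hw
    simp
  · refine Nat.card_eq_zero.2 (.inl ⟨?_⟩)
    rintro ⟨t, -, rfl⟩
    simp at hw

lemma card_eraseFlats_eq (n : ℕ) {w : List Step} (hw : Step.F ∉ w) :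
    Nat.card {p : List Step // p.length = n ∧ eraseFlats p = w} = n.choose w.length := by
  induction n generalizing w with
  | zero =>
    simp only [List.length_eq_zero_iff]
    cases w with
    | nil =>
      rw [List.length_nil, Nat.choose_zero_right, Nat.card_eq_one_iff_unique]
      exact ⟨⟨fun x y => Subtype.ext (x.2.1.trans y.2.1.symm)⟩, ⟨⟨[], rfl, rfl⟩⟩⟩
    | cons c w =>
      rw [List.length_cons, Nat.choose_zero_succ]
      exact Nat.card_eq_zero.2 (.inl ⟨fun ⟨p, hp, h⟩ => by subst hp; simp at h⟩)
  | succ n ih =>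
    rw [card_length_succ, show (Finset.univ : Finset Step) = {.U, .F, .D} from rfl,
      Finset.sum_insert (by decide), Finset.sum_insert (by decide), Finset.sum_singleton,
      card_eraseFlats_cons_eq n (c := .U) (by decide),
      card_eraseFlats_cons_eq n (c := .D) (by decide)]
    simp only [eraseFlats_cons_F]
    cases w with
    | nil => simp [ih]
    | cons c w =>
      have hw' : Step.F ∉ w := fun h => hw (List.mem_cons_of_mem c h)
      cases c with
      | F => simp at hw
      | U => simp [ih hw, ih hw', Nat.choose_succ_succ, add_comm]
      | D => simp [ih hw, ih hw', Nat.choose_succ_succ, add_comm]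

lemma sum_Ico_one_eq_choose_two (m : ℕ) : ∑ a ∈ Finset.Ico 1 m, a = m.choose 2 := by
  rcases Nat.eq_zero_or_pos m with rfl | hm
  · rfl
  · rw [Nat.choose_two_right, ← Finset.sum_range_id, Finset.range_eq_Ico,
      Finset.sum_eq_sum_Ico_succ_bot hm, zero_add]

lemma twoPeakWord_inj {m a b m' a' b' : ℕ} (h : 1 ≤ b ∧ b ≤ a ∧ a < m)
    (h' : 1 ≤ b' ∧ b' ≤ a' ∧ a' < m') (heq : twoPeakWord m a b = twoPeakWord m' a' b') :
    m = m' ∧ a = a' ∧ b = b' := by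
  have hd {x y : Step} (hxy : x ≠ y) {k : ℕ} (hk : k ≠ 0) (l : List Step) :
      (replicate k x ++ l).head? ≠ some y := by
    rw [List.head?_replicate_append hk]; simpa using hxy
  obtain ⟨rfl, heq⟩ := List.replicate_append_inj_of_head?_ne
    (hd (by decide) (by omega) _) (hd (by decide) (by omega) _) heq
  obtain ⟨rfl, heq⟩ := List.replicate_append_inj_of_head?_ne
    (hd (by decide) (by omega) _) (hd (by decide) (by omega) _) heq
  have hlen := congrArg List.length heq
  simp only [List.length_append, List.length_replicate] at hlen
  omega

def twoPeakParams (n : ℕ) : Finset (Σ _ : ℕ, Σ _ : ℕ, ℕ) :=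
  (Finset.range (n + 1)).sigma fun m => (Finset.Ico 1 m).sigma fun a => Finset.Icc 1 a

lemma mem_twoPeakParams {n m a b : ℕ} :
    (⟨m, a, b⟩ : Σ _ : ℕ, Σ _ : ℕ, ℕ) ∈ twoPeakParams n ↔
      m ≤ n ∧ 1 ≤ b ∧ b ≤ a ∧ a < m := by
  simp only [twoPeakParams, Finset.mem_sigma, Finset.mem_range, Finset.mem_Ico, Finset.mem_Icc]
  omega

def twoPeakWords (n : ℕ) : Finset (List Step) :=
  (twoPeakParams n).image fun x => twoPeakWord x.1 x.2.1 x.2.2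

lemma isMotzkin_and_plt_eq_two_iff_mem {n : ℕ} {p : List Step} (hp : p.length = n) :
    IsMotzkin p ∧ plt p = 2 ↔ eraseFlats p ∈ twoPeakWords n := by
  simp only [isMotzkin_and_plt_eq_two_iff, twoPeakWords, Finset.mem_image, Sigma.exists,
    mem_twoPeakParams]
  constructor
  · rintro ⟨m, a, b, hb, hba, ham, hw⟩
    have hlen := length_eraseFlats_le p
    rw [hw, length_twoPeakWord hba ham.le] at hlen
    exact ⟨m, a, b, ⟨by omega, hb, hba, ham⟩, hw.symm⟩
  · rintro ⟨m, a, b, ⟨-, hb, hba, ham⟩, hw⟩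
    exact ⟨m, a, b, hb, hba, ham, hw.symm⟩

theorem card_motzkin_plt_eq_two (n : ℕ) :
    Nat.card {p : List Step // p.length = n ∧ IsMotzkin p ∧ plt p = 2}
      = ∑ m ∈ Finset.range (n + 1), m.choose 2 * n.choose (2 * m) := by
  have hinj : Set.InjOn (fun x : Σ _ : ℕ, Σ _ : ℕ, ℕ => twoPeakWord x.1 x.2.1 x.2.2)
      (twoPeakParams n) := by
    rintro ⟨m, a, b⟩ hx ⟨m', a', b'⟩ hx' heq
    obtain ⟨rfl, rfl, rfl⟩ :=
      twoPeakWord_inj (mem_twoPeakParams.1 hx).2 (mem_twoPeakParams.1 hx').2 heq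
    rfl
  calc Nat.card {p : List Step // p.length = n ∧ IsMotzkin p ∧ plt p = 2}
      = Nat.card {p : List Step // p.length = n ∧ eraseFlats p ∈ twoPeakWords n} :=
        Nat.card_congr <| Equiv.subtypeEquivRight fun p =>
          and_congr_right isMotzkin_and_plt_eq_two_iff_mem
    _ = ∑ w ∈ twoPeakWords n, Nat.card {p : List Step // p.length = n ∧ eraseFlats p = w} :=
        Nat.card_subtype_and_mem_finset _ _ _
    _ = ∑ x ∈ twoPeakParams n, n.choose (2 * x.1) := by
        rw [twoPeakWords, Finset.sum_image hinj]
        refine Finset.sum_congr rfl ?_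
        rintro ⟨m, a, b⟩ hx
        obtain ⟨-, -, hba, ham⟩ := mem_twoPeakParams.1 hx
        rw [card_eraseFlats_eq n (F_not_mem_twoPeakWord m a b), length_twoPeakWord hba ham.le]
    _ = ∑ m ∈ Finset.range (n + 1), m.choose 2 * n.choose (2 * m) := by
        simp only [twoPeakParams, Finset.sum_sigma, Finset.sum_const, Nat.card_Icc,
          smul_eq_mul, Finset.card_sigma, add_tsub_cancel_right, sum_Ico_one_eq_choose_two]

lemma Finset.sum_range_two_mul_eq {M : Type*} [AddCommMonoid M] (f : ℕ → M) (K : ℕ) :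
    ∑ k ∈ Finset.range (2 * K), f k
      = ∑ j ∈ Finset.range K, (f (2 * j) + f (2 * j + 1)) := by
  induction K with
  | zero => simp
  | succ K ih =>
    rw [Nat.mul_succ, Finset.sum_range_succ, Finset.sum_range_succ, Finset.sum_range_succ, ih,
      add_assoc]

lemma Nat.sum_range_choose_of_lt {N M : ℕ} (h : N < M) :
    ∑ k ∈ Finset.range M, N.choose k = 2 ^ N := by
  rw [← Nat.sum_range_choose, ← Finset.sum_range_add_sum_Ico _ h, add_eq_left]
  exact Finset.sum_eq_zero fun k hk => Nat.choose_eq_zero_of_lt (Finset.mem_Ico.1 hk).1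

lemma Nat.sum_range_choose_odd {N K : ℕ} (h : N < 2 * K) :
    ∑ j ∈ Finset.range K, (N + 1).choose (2 * j + 1) = 2 ^ N := by
  simp_rw [Nat.choose_succ_succ']
  rw [← Finset.sum_range_two_mul_eq, Nat.sum_range_choose_of_lt h]

lemma Nat.sum_range_choose_even {N K : ℕ} (h : N + 1 < 2 * K) :
    ∑ j ∈ Finset.range K, (N + 1).choose (2 * j) = 2 ^ N := by
  have hsum := Finset.sum_range_two_mul_eq (fun k => (N + 1).choose k) K
  rw [Nat.sum_range_choose_of_lt h, Finset.sum_add_distrib, Nat.sum_range_choose_odd (by omega),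
    pow_succ] at hsum
  omega

lemma eight_mul_choose_two_mul_choose_add (N j : ℕ) :
    8 * ((j + 1).choose 2 * (N + 3).choose (2 * j + 2) : ℚ)
        + (N + 3) * (N + 2).choose (2 * j + 1)
      = (N + 3) * (N + 2) * (N + 1).choose (2 * j) := by
  have h1 := Nat.add_one_mul_choose_eq (N + 2) (2 * j + 1)
  have h2 := Nat.add_one_mul_choose_eq (N + 1) (2 * j)
  rw [Nat.cast_choose_two]
  qify at h1 h2
  push_cast at h1 h2 ⊢
  linear_combination (-(N + 3 : ℚ)) * h2 + (-2 * j : ℚ) * h1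

theorem sum_choose_two_mul_choose (N : ℕ) :
    8 * ∑ m ∈ Finset.range (N + 4), (m.choose 2 * (N + 3).choose (2 * m) : ℚ)
      = N * (N + 3) * 2 ^ N := by
  have hodd : ∑ j ∈ Finset.range (N + 3), ((N + 2).choose (2 * j + 1) : ℚ) = 2 ^ (N + 1) := by
    exact_mod_cast Nat.sum_range_choose_odd (by omega)
  have heven : ∑ j ∈ Finset.range (N + 3), ((N + 1).choose (2 * j) : ℚ) = 2 ^ N := by
    exact_mod_cast Nat.sum_range_choose_even (by omega)
  have hterms := Finset.sum_congr rfl fun j (_ : j ∈ Finset.range (N + 3)) =>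
    eight_mul_choose_two_mul_choose_add N j
  rw [Finset.sum_add_distrib, ← Finset.mul_sum, ← Finset.mul_sum, ← Finset.mul_sum, hodd,
    heven] at hterms
  rw [Finset.sum_range_succ']
  simp only [Nat.choose_zero_succ, Nat.cast_zero, zero_mul, add_zero, mul_add_one]
  linear_combination hterms

/-- The number of Motzkin paths of length n ≥ 3 with exactly two plateaus is
(n−3)·n·2^(n−6), interpreted in ℚ. -/
theorem motzkin_two_plateaus (n : ℕ) (hn : 3 ≤ n) :
    (Nat.card {p : List Step // p.length = n ∧ IsMotzkin p ∧ plt p = 2} : ℚ)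
      = ((n : ℚ) - 3) * (n : ℚ) * (2 : ℚ) ^ ((n : ℤ) - 6) := by
  obtain ⟨N, rfl⟩ := Nat.exists_eq_add_of_le' hn
  have hpow : (2 : ℚ) ^ ((↑(N + 3) : ℤ) - 6) = 2 ^ N / 8 := by
    rw [show ((N + 3 : ℕ) : ℤ) - 6 = N - 3 by push_cast; ring, zpow_sub₀ two_ne_zero,
      zpow_natCast]
    norm_num
  rw [card_motzkin_plt_eq_two, hpow]
  push_cast
  linear_combination sum_choose_two_mul_choose N / 8
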